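/- Let d ≥ 1, let A be a symmetric positive definite d×d real matrix whose eigenvalues lie in [μ, β] with 0 < μ ≤ β, let f(x) = (1/2)⟨x, A x⟩, let α ≥ 2√β, and let X : ℝ → ℝ^d be a twice continuously differentiable solution of Ẍ(t) + αẊ(t) + A X(t) = 0. Then for all 0 ≤ t₁ < t₂ and every continuously differentiable curve Y : [t₁,t₂] → ℝ^d with Y(t₁) = X(t₁) and Y(t₂) = X(t₂), one has J_α[Y] ≥ J_α[X], where J_α[Y] = ∫_{t₁}^{t₂} e^{αt}( (1/2)‖Ẏ(t)‖² − f(Y(t)) ) dt. -/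

import Mathlib

open scoped RealInnerProductSpace
open Set

/-- The action functional with constant damping `α` on `[t₁, t₂]` for the quadratic loss
`f(x) = (1/2)⟨x, A x⟩`, evaluated on a curve `Y` with derivative `Y'`. -/
noncomputable def constDampAction (d : ℕ) (A : Matrix (Fin d) (Fin d) ℝ) (α t₁ t₂ : ℝ)
    (Y Y' : ℝ → EuclideanSpace ℝ (Fin d)) : ℝ :=
  ∫ t in t₁..t₂, Real.exp (α * t) *
    ((1 / 2) * ‖Y' t‖ ^ 2 - (1 / 2) * ⟪Y t, Matrix.toEuclideanLin A (Y t)⟫)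

/-!
Put `Z = Y - X`, `L(y, v) = ½‖v‖² - ½⟪y, A y⟫` and
`R(z, w) = ½‖w + (α/2)z‖² + ½((α/2)²‖z‖² - ⟪z, A z⟫)`.
Expanding the quadratic `L` around `X` (using that `A` is symmetric) and completing the square,
`e^{αt} L(Y, Ẏ) = e^{αt} L(X, Ẋ) + d/dt (e^{αt} (⟪Ẋ, Z⟫ - (α/4)‖Z‖²)) + e^{αt} R(Z, Ż)`
along any solution of `Ẍ + αẊ + AX = 0`. The boundary term vanishes at both endpoints because `Z`
does, and `R ≥ 0` because `⟪z, A z⟫ ≤ β‖z‖² ≤ (α/2)²‖z‖²`.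
-/

namespace DampedAction

variable {E : Type*} [NormedAddCommGroup E] [InnerProductSpace ℝ E] (B : E →L[ℝ] E)

noncomputable def lagrangian (y v : E) : ℝ := (1 / 2) * ‖v‖ ^ 2 - (1 / 2) * ⟪y, B y⟫

noncomputable def action (α t₁ t₂ : ℝ) (Y Y' : ℝ → E) : ℝ :=
  ∫ t in t₁..t₂, Real.exp (α * t) * lagrangian B (Y t) (Y' t)

noncomputable def remainder (α : ℝ) (z w : E) : ℝ :=
  (1 / 2) * ‖w + (α / 2) • z‖ ^ 2 + (1 / 2) * ((α / 2) ^ 2 * ‖z‖ ^ 2 - ⟪z, B z⟫)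

@[fun_prop]
lemma continuousOn_lagrangian {s : Set ℝ} {Y Y' : ℝ → E} (hY : ContinuousOn Y s)
    (hY' : ContinuousOn Y' s) : ContinuousOn (fun t => lagrangian B (Y t) (Y' t)) s := by
  unfold DampedAction.lagrangian
  fun_prop

@[fun_prop]
lemma continuousOn_remainder {α : ℝ} {s : Set ℝ} {Z Z' : ℝ → E} (hZ : ContinuousOn Z s)
    (hZ' : ContinuousOn Z' s) : ContinuousOn (fun t => remainder B α (Z t) (Z' t)) s := by
  unfold DampedAction.remainder
  fun_prop

lemma remainder_nonneg {α : ℝ} (hBα : ∀ z, ⟪z, B z⟫ ≤ (α / 2) ^ 2 * ‖z‖ ^ 2) (z w : E) :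
    0 ≤ remainder B α z w := by
  have := hBα z
  unfold remainder
  positivity

lemma lagrangian_add (hB : (B : E →ₗ[ℝ] E).IsSymmetric) (x v z w : E) :
    lagrangian B (x + z) (v + w) = lagrangian B x v + (⟪v, w⟫ - ⟪B x, z⟫) + lagrangian B z w := by
  have hzx : ⟪x, B z⟫ = ⟪B x, z⟫ := (hB x z).symm
  simp only [lagrangian, map_add, inner_add_left, inner_add_right, norm_add_sq_real, hzx,
    real_inner_comm (B x) z]
  ring

lemma lagrangian_eq_remainder (α : ℝ) (z w : E) :
    lagrangian B z w = remainder B α z w - (α / 2) * ⟪z, w⟫ - (α / 2) ^ 2 * ‖z‖ ^ 2 := by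
  simp only [lagrangian, remainder, norm_add_sq_real, norm_smul, inner_smul_right,
    Real.norm_eq_abs, mul_pow, sq_abs, real_inner_comm w z]
  ring

lemma hasDerivAt_exp_mul_inner_sub {α t : ℝ} {p z : ℝ → E} {p' z' : E}
    (hp : HasDerivAt p p' t) (hz : HasDerivAt z z' t) :
    HasDerivAt (fun s => Real.exp (α * s) * (⟪p s, z s⟫ - α / 4 * ‖z s‖ ^ 2))
      (Real.exp (α * t) * (⟪p t, z'⟫ + ⟪p' + α • p t, z t⟫ - (α / 2) * ⟪z t, z'⟫
        - (α / 2) ^ 2 * ‖z t‖ ^ 2)) t := by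
  have hexp : HasDerivAt (fun s => Real.exp (α * s)) (Real.exp (α * t) * α) t := by
    simpa using ((hasDerivAt_id t).const_mul α).exp
  have hnorm := (hz.norm_sq).const_mul (α / 4)
  refine (hexp.mul ((hp.inner ℝ hz).sub hnorm)).congr_deriv ?_
  simp only [Pi.sub_apply, inner_add_left, real_inner_smul_left]
  ring

theorem action_le_action_of_overdamped (hB : (B : E →ₗ[ℝ] E).IsSymmetric) {α : ℝ}
    (hBα : ∀ z, ⟪z, B z⟫ ≤ (α / 2) ^ 2 * ‖z‖ ^ 2) {X X' : ℝ → E}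
    (hX : ∀ t, HasDerivAt X (X' t) t) (hX' : ∀ t, HasDerivAt X' (-(α • X' t + B (X t))) t)
    {t₁ t₂ : ℝ} (ht : t₁ ≤ t₂) {Y Y' : ℝ → E}
    (hY : ∀ t ∈ Icc t₁ t₂, HasDerivWithinAt Y (Y' t) (Icc t₁ t₂) t)
    (hY' : ContinuousOn Y' (Icc t₁ t₂)) (h₁ : Y t₁ = X t₁) (h₂ : Y t₂ = X t₂) :
    action B α t₁ t₂ X X' ≤ action B α t₁ t₂ Y Y' := by
  set Z := fun t => Y t - X t
  set Z' := fun t => Y' t - X' t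
  set ψ := fun t => Real.exp (α * t) *
    (⟪X' t, Z' t⟫ - ⟪B (X t), Z t⟫ - (α / 2) * ⟪Z t, Z' t⟫ - (α / 2) ^ 2 * ‖Z t‖ ^ 2)
  have hXc : Continuous X := continuous_iff_continuousAt.2 fun t => (hX t).continuousAt
  have hX'c : Continuous X' := continuous_iff_continuousAt.2 fun t => (hX' t).continuousAt
  have hYc : ContinuousOn Y (Icc t₁ t₂) := fun t ht => (hY t ht).continuousWithinAt
  have hintegrable : ∀ {f : ℝ → ℝ}, ContinuousOn f (Icc t₁ t₂) →
      IntervalIntegrable f MeasureTheory.volume t₁ t₂ :=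
    fun hf => hf.intervalIntegrable_of_Icc ht
  have hψ : ∫ t in t₁..t₂, ψ t = 0 := by
    have hderiv : ∀ t ∈ Ioo t₁ t₂, HasDerivAt
        (fun s => Real.exp (α * s) * (⟪X' s, Z s⟫ - α / 4 * ‖Z s‖ ^ 2)) (ψ t) t := by
      intro t ht
      have hZ := ((hY t (Ioo_subset_Icc_self ht)).hasDerivAt (Icc_mem_nhds ht.1 ht.2)).sub (hX t)
      refine (hasDerivAt_exp_mul_inner_sub (hX' t) hZ).congr_deriv ?_
      rw [show -(α • X' t + B (X t)) + α • X' t = -B (X t) by abel, inner_neg_left]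
      simp only [ψ, Z, Z', Pi.sub_apply]
      ring
    rw [intervalIntegral.integral_eq_sub_of_hasDeriv_right_of_le ht (by fun_prop)
      (fun t ht => (hderiv t ht).hasDerivWithinAt) (hintegrable (by fun_prop))]
    simp [Z, h₁, h₂]
  have hpointwise : ∀ t, Real.exp (α * t) * lagrangian B (Y t) (Y' t) =
      Real.exp (α * t) * lagrangian B (X t) (X' t) + ψ t
        + Real.exp (α * t) * remainder B α (Z t) (Z' t) := by
    intro t
    rw [show Y t = X t + Z t by simp [Z], show Y' t = X' t + Z' t by simp [Z'],
      lagrangian_add B hB, lagrangian_eq_remainder B α (Z t) (Z' t)]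
    ring
  calc action B α t₁ t₂ X X'
      = (∫ t in t₁..t₂, Real.exp (α * t) * lagrangian B (X t) (X' t)) + ∫ t in t₁..t₂, ψ t := by
        rw [hψ, add_zero, action]
    _ ≤ (∫ t in t₁..t₂, Real.exp (α * t) * lagrangian B (X t) (X' t)) + (∫ t in t₁..t₂, ψ t)
        + ∫ t in t₁..t₂, Real.exp (α * t) * remainder B α (Z t) (Z' t) :=
        le_add_of_nonneg_right <| intervalIntegral.integral_nonneg ht fun t _ =>
          mul_nonneg (Real.exp_pos _).le (remainder_nonneg B hBα _ _)
    _ = action B α t₁ t₂ Y Y' := by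
        rw [← intervalIntegral.integral_add, ← intervalIntegral.integral_add, action]
        · simp only [hpointwise]
        all_goals exact hintegrable (by fun_prop)

end DampedAction

theorem overdamped_nesterov_global_minimality_general
    (d : ℕ) (A : Matrix (Fin d) (Fin d) ℝ) (hA : A.PosDef)
    (β : ℝ)
    (hhi : ∀ x : EuclideanSpace ℝ (Fin d), ⟪x, Matrix.toEuclideanLin A x⟫ ≤ β * ‖x‖ ^ 2)
    (α : ℝ) (hα : 2 * Real.sqrt β ≤ α)
    (X X' X'' : ℝ → EuclideanSpace ℝ (Fin d))
    (hX : ∀ t : ℝ, HasDerivAt X (X' t) t)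
    (hX' : ∀ t : ℝ, HasDerivAt X' (X'' t) t)
    (hODE : ∀ t : ℝ, X'' t + α • X' t + Matrix.toEuclideanLin A (X t) = 0) :
    ∀ t₁ t₂ : ℝ, 0 ≤ t₁ → t₁ < t₂ →
      ∀ Y Y' : ℝ → EuclideanSpace ℝ (Fin d),
        (∀ t ∈ Icc t₁ t₂, HasDerivWithinAt Y (Y' t) (Icc t₁ t₂) t) →
        ContinuousOn Y' (Icc t₁ t₂) →
        Y t₁ = X t₁ → Y t₂ = X t₂ →
        constDampAction d A α t₁ t₂ Y Y' ≥ constDampAction d A α t₁ t₂ X X' := by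
  intro t₁ t₂ _ hlt Y Y' hY hY' h₁ h₂
  set B := (Matrix.toEuclideanLin A).toContinuousLinearMap
  have hB : (B : EuclideanSpace ℝ (Fin d) →ₗ[ℝ] EuclideanSpace ℝ (Fin d)).IsSymmetric := by
    simpa [B] using Matrix.isSymmetric_toEuclideanLin_iff.mpr hA.isHermitian
  have hβα : β ≤ (α / 2) ^ 2 := (Real.sqrt_le_iff.mp (by linarith)).2
  have hX'' : ∀ t, X'' t = -(α • X' t + B (X t)) := fun t =>
    eq_neg_of_add_eq_zero_left ((add_assoc _ _ _).symm.trans (hODE t))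
  exact DampedAction.action_le_action_of_overdamped B hB
    (fun z => (hhi z).trans (mul_le_mul_of_nonneg_right hβα (sq_nonneg _)))
    hX (fun t => hX'' t ▸ hX' t) hlt.le hY hY' h₁ h₂

/-- **Global optimality of overdamped Nesterov.**  Let `A` be a symmetric positive definite
matrix with eigenvalues in `[μ, β]` (i.e. `μ‖x‖² ≤ ⟨x, A x⟩ ≤ β‖x‖²`), `0 < μ ≤ β`, and let
`α ≥ 2√β`.  If `X` is a twice continuously differentiable solution of `Ẍ + αẊ + A X = 0`,
then for all `0 ≤ t₁ < t₂`, `X` minimizes the action `J_α` among all `C¹` curves with the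
same endpoints. -/
theorem overdamped_nesterov_global_minimality
    (d : ℕ) (hd : 1 ≤ d) (A : Matrix (Fin d) (Fin d) ℝ) (hA : A.PosDef)
    (μ β : ℝ) (hμ : 0 < μ) (hμβ : μ ≤ β)
    (hlo : ∀ x : EuclideanSpace ℝ (Fin d), μ * ‖x‖ ^ 2 ≤ ⟪x, Matrix.toEuclideanLin A x⟫)
    (hhi : ∀ x : EuclideanSpace ℝ (Fin d), ⟪x, Matrix.toEuclideanLin A x⟫ ≤ β * ‖x‖ ^ 2)
    (α : ℝ) (hα : 2 * Real.sqrt β ≤ α)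
    (X X' X'' : ℝ → EuclideanSpace ℝ (Fin d))
    (hX : ∀ t : ℝ, HasDerivAt X (X' t) t)
    (hX' : ∀ t : ℝ, HasDerivAt X' (X'' t) t)
    (hX'' : Continuous X'')
    (hODE : ∀ t : ℝ, X'' t + α • X' t + Matrix.toEuclideanLin A (X t) = 0) :
    ∀ t₁ t₂ : ℝ, 0 ≤ t₁ → t₁ < t₂ →
      ∀ Y Y' : ℝ → EuclideanSpace ℝ (Fin d),
        (∀ t ∈ Icc t₁ t₂, HasDerivWithinAt Y (Y' t) (Icc t₁ t₂) t) →
        ContinuousOn Y' (Icc t₁ t₂) →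
        Y t₁ = X t₁ → Y t₂ = X t₂ →
        constDampAction d A α t₁ t₂ Y Y' ≥ constDampAction d A α t₁ t₂ X X' :=
  overdamped_nesterov_global_minimality_general d A hA β hhi α hα X X' X'' hX hX' hODE
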